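/- If π̲ ≤ p ≤ π̄ and F(p) ≥ 1/2, then p F(p)(1 − F(p)) + (2 F(p) − 1)·∫_{π̲}^{p} x f(x) dx ≤ π̄ F(p)². -/

import Mathlib

open MeasureTheory Set

theorem intervalIntegral_id_mul_le_mul_integral {f : ℝ → ℝ} {a b : ℝ} (hab : a ≤ b)
    (hf : IntervalIntegrable f volume a b) (hf_nonneg : ∀ x ∈ Icc a b, 0 ≤ f x) :
    ∫ x in a..b, x * f x ≤ b * ∫ x in a..b, f x := by
  rw [← intervalIntegral.integral_const_mul]
  refine intervalIntegral.integral_mono_on hab (hf.continuousOn_mul continuousOn_id)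
    (hf.const_mul b) fun x hx => ?_
  exact mul_le_mul_of_nonneg_right hx.2 (hf_nonneg x hx)

theorem stmt_19
    (πlo πhi : ℝ) (f F : ℝ → ℝ)
    (hcont : ContinuousOn f (Set.Icc πlo πhi))
    (hnn : ∀ x ∈ Set.Icc πlo πhi, 0 ≤ f x)
    (hF : ∀ p, F p = ∫ x in πlo..p, f x)
    (p : ℝ) (hp : πlo ≤ p) (hp' : p ≤ πhi) (hFp : 1 / 2 ≤ F p) :
    p * F p * (1 - F p) + (2 * F p - 1) * (∫ x in πlo..p, x * f x) ≤
      πhi * (F p) ^ 2 := by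
  have hsub : Icc πlo p ⊆ Icc πlo πhi := Icc_subset_Icc_right hp'
  have hmoment : ∫ x in πlo..p, x * f x ≤ p * F p := by
    rw [hF]
    exact intervalIntegral_id_mul_le_mul_integral hp
      ((hcont.mono hsub).intervalIntegrable_of_Icc hp) fun x hx => hnn x (hsub hx)
  calc p * F p * (1 - F p) + (2 * F p - 1) * (∫ x in πlo..p, x * f x)
      ≤ p * F p * (1 - F p) + (2 * F p - 1) * (p * F p) := by gcongr; linarith
    _ = p * F p ^ 2 := by ring
    _ ≤ πhi * F p ^ 2 := by gcongr
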